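/- Let δ ∈ (0,1), μ ∈ [−1, −δ/2], η = μ + δ/2, k > 0, and ε ∈ (0,1), and suppose that |erf(kt) − sign(t)| ≤ ε for every real t with |t| ≥ δ/2. Define F(x) = ½(erf(k(x − η)) − erf(k(−x − η))), the odd part of x ↦ erf(k(x − η)). Then: (i) F(μ) ≤ −1 + ε; (ii) F(x) ≥ −ε for every x ∈ [μ + δ, 1]; and (iii) |F(x)| ≤ 1 for every real x. -/
import Mathlib


/-- The real error function `erf(x) = (2/√π) ∫₀ˣ e^{-t²} dt`. -/
noncomputable def erf (x : ℝ) : ℝ :=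
  2 / Real.sqrt Real.pi * ∫ t in (0:ℝ)..x, Real.exp (-t ^ 2)

lemma erf_neg (x : ℝ) : erf (-x) = -erf x := by
  unfold erf
  have h : (∫ t in (0:ℝ)..(-x), Real.exp (-t ^ 2))
      = -∫ t in (0:ℝ)..x, Real.exp (-t ^ 2) := by
    have := intervalIntegral.integral_comp_neg (a := x) (b := 0)
      (fun t => Real.exp (-t ^ 2))
    simp only [neg_zero, neg_neg, neg_sq] at this
    rw [← this, intervalIntegral.integral_symm]
  rw [h]; ring

lemma erf_nonneg_of_nonneg {x : ℝ} (hx : 0 ≤ x) : 0 ≤ erf x := by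
  unfold erf
  apply mul_nonneg
  · positivity
  · apply intervalIntegral.integral_nonneg hx
    intro t _; positivity

lemma erf_le_one_of_nonneg {x : ℝ} (hx : 0 ≤ x) : erf x ≤ 1 := by
  have hint : MeasureTheory.IntegrableOn (fun t : ℝ => Real.exp (-t ^ 2)) (Set.Ioi 0) := by
    have := (integrable_exp_neg_mul_sq (b := 1) one_pos).integrableOn (s := Set.Ioi 0)
    simpa using this
  have h1 : (∫ t in (0:ℝ)..x, Real.exp (-t ^ 2))
      ≤ ∫ t in Set.Ioi (0:ℝ), Real.exp (-t ^ 2) := by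
    rw [intervalIntegral.integral_of_le hx]
    apply MeasureTheory.setIntegral_mono_set hint
    · filter_upwards with t using by positivity
    · exact Filter.Eventually.of_forall Set.Ioc_subset_Ioi_self
  have h2 : (∫ t in Set.Ioi (0:ℝ), Real.exp (-t ^ 2)) = Real.sqrt Real.pi / 2 := by
    have := integral_gaussian_Ioi 1
    simpa using this
  rw [h2] at h1
  have hπ : 0 < Real.sqrt Real.pi := Real.sqrt_pos.mpr Real.pi_pos
  unfold erf
  calc 2 / Real.sqrt Real.pi * ∫ t in (0:ℝ)..x, Real.exp (-t ^ 2)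
      ≤ 2 / Real.sqrt Real.pi * (Real.sqrt Real.pi / 2) := by
        apply mul_le_mul_of_nonneg_left h1; positivity
    _ = 1 := by field_simp

lemma abs_erf_le_one (x : ℝ) : |erf x| ≤ 1 := by
  rcases le_or_gt 0 x with hx | hx
  · rw [abs_of_nonneg (erf_nonneg_of_nonneg hx)]
    exact erf_le_one_of_nonneg hx
  · have hx' : 0 ≤ -x := by linarith
    have h1 := erf_nonneg_of_nonneg hx'
    have h2 := erf_le_one_of_nonneg hx'
    rw [erf_neg] at h1 h2
    rw [abs_le]; constructor <;> linarith

/-- Properties of the odd part `F(x) = ½(erf(k(x-η)) - erf(k(-x-η)))` of the shifted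
step, with `η = μ + δ/2`: `F(μ) ≤ -1 + ε`, `F(x) ≥ -ε` on `[μ + δ, 1]`, and `|F| ≤ 1`. -/
theorem odd_shifted_step_properties (δ μ η k ε : ℝ) (hδ : δ ∈ Set.Ioo (0 : ℝ) 1)
    (hμ : μ ∈ Set.Icc (-1 : ℝ) (-δ / 2)) (hη : η = μ + δ / 2) (hk : 0 < k)
    (hε : ε ∈ Set.Ioo (0 : ℝ) 1)
    (herf : ∀ t : ℝ, δ / 2 ≤ |t| → |erf (k * t) - Real.sign t| ≤ ε) :
    (erf (k * (μ - η)) - erf (k * (-μ - η))) / 2 ≤ -1 + ε ∧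
    (∀ x ∈ Set.Icc (μ + δ) 1, -ε ≤ (erf (k * (x - η)) - erf (k * (-x - η))) / 2) ∧
    (∀ x : ℝ, |(erf (k * (x - η)) - erf (k * (-x - η))) / 2| ≤ 1) := by
  obtain ⟨hδ0, hδ1⟩ := hδ
  obtain ⟨hμ1, hμ2⟩ := hμ
  obtain ⟨hε0, hε1⟩ := hε
  refine ⟨?_, ?_, ?_⟩
  · -- F(μ) ≤ -1 + ε
    have ht1 : μ - η = -(δ/2) := by rw [hη]; ring
    have hpos : δ/2 ≤ -μ - η := by rw [hη]; linarith
    have h1 : |erf (k * (μ - η)) - Real.sign (μ - η)| ≤ ε := by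
      apply herf; rw [ht1, abs_neg, abs_of_pos (by linarith)]
    have h2 : |erf (k * (-μ - η)) - Real.sign (-μ - η)| ≤ ε := by
      apply herf; rw [abs_of_pos (by linarith)]; exact hpos
    rw [ht1, Real.sign_of_neg (by linarith)] at h1
    rw [Real.sign_of_pos (by linarith)] at h2
    rw [abs_le] at h1 h2
    rw [ht1]
    linarith [h1.2, h2.1]
  · intro x hx
    obtain ⟨hx1, hx2⟩ := hx
    have hpos : δ/2 ≤ x - η := by rw [hη]; linarith
    have h1 : |erf (k * (x - η)) - Real.sign (x - η)| ≤ ε := by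
      apply herf; rw [abs_of_pos (by linarith)]; exact hpos
    rw [Real.sign_of_pos (by linarith)] at h1
    rw [abs_le] at h1
    have h2 : |erf (k * (-x - η))| ≤ 1 := abs_erf_le_one _
    rw [abs_le] at h2
    linarith [h1.1, h2.2]
  · intro x
    have h1 := abs_erf_le_one (k * (x - η))
    have h2 := abs_erf_le_one (k * (-x - η))
    rw [abs_le] at h1 h2 ⊢
    constructor <;> [linarith [h1.1, h2.2]; linarith [h1.2, h2.1]]
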